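/- arXiv:2302.14016 — 4 statements merged into one kernel-verified Lean document; each statement's English description precedes it below -/
import Mathlib

section
/- Let Z be a complex skew-symmetric m×m matrix (Zᵀ = −Z), let σ > 0 be a singular value of Z, and let u be a unit vector with Z*Z u = σ² u. Then v := σ⁻¹ · conj(Z u) satisfies Z*Z v = σ² v, ‖v‖ = 1, and u* v = 0. In particular every nonzero singular value of a skew-symmetric complex matrix has even multiplicity. -/
open Matrix ComplexConjugate

/-- Let `Z` be a complex skew-symmetric `m×m` matrix, `σ > 0` a singular value of `Z`
(`Z*Z u = σ² u` for a unit vector `u`).  Then `v := σ⁻¹ ⬝ conj(Z u)` is again a unit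
eigenvector of `Z*Z` for the eigenvalue `σ²`, orthogonal to `u`.  (This is the key step
showing that nonzero singular values of skew-symmetric matrices have even multiplicity.) -/
theorem stmt_2 {m : ℕ} (Z : Matrix (Fin m) (Fin m) ℂ) (hskew : Zᵀ = -Z)
    (σ : ℝ) (hσ : 0 < σ) (u : EuclideanSpace ℂ (Fin m)) (hu : ‖u‖ = 1)
    (hev : (Zᴴ * Z) *ᵥ (fun i => u i) = ((σ : ℂ) ^ 2) • fun i => u i)
    (v : EuclideanSpace ℂ (Fin m))
    (hv : ∀ i, v i = (σ : ℂ)⁻¹ * conj ((Z *ᵥ fun k => u k) i)) :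
    (Zᴴ * Z) *ᵥ (fun i => v i) = ((σ : ℂ) ^ 2) • (fun i => v i) ∧
      ‖v‖ = 1 ∧ ∑ i, conj (u i) * v i = 0 := by
  have hσℂ : (σ : ℂ) ≠ 0 := by exact_mod_cast hσ.ne'
  set u' : Fin m → ℂ := fun i => u i with hu'
  set w : Fin m → ℂ := Z *ᵥ u' with hw
  clear_value w
  have hmap : (Zᴴ)ᵀ = -Zᴴ := by
    ext i j
    have h := congrFun (congrFun hskew j) i
    simp only [transpose_apply, neg_apply] at h ⊢
    simp [conjTranspose_apply, h]
  have hvfun : (fun i => v i) = (σ : ℂ)⁻¹ • star w := by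
    funext i
    simp [hv i, Pi.smul_apply, smul_eq_mul, ← hw, hu']
  have h1 : (Z * Zᴴ) *ᵥ w = ((σ : ℂ) ^ 2) • w := by
    have e : (Z * Zᴴ) *ᵥ w = Z *ᵥ ((Zᴴ * Z) *ᵥ u') := by
      rw [hw, mulVec_mulVec, mulVec_mulVec, Matrix.mul_assoc]
    rw [e, hev, mulVec_smul, ← hw]
  have h2 : star ((Z * Zᴴ) *ᵥ w) = (Zᴴ * Z) *ᵥ star w := by
    rw [star_mulVec, conjTranspose_mul, conjTranspose_conjTranspose,
      ← mulVec_transpose, transpose_mul, hmap, hskew]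
    simp [Matrix.neg_mul, Matrix.mul_neg]
  have key : (Zᴴ * Z) *ᵥ (fun i => v i) = ((σ : ℂ) ^ 2) • (fun i => v i) := by
    rw [hvfun, mulVec_smul, ← h2, h1]
    ext i
    simp [smul_eq_mul]
    ring
  have hsum : ∑ i, ‖u i‖ ^ 2 = (1 : ℝ) := by
    rw [EuclideanSpace.norm_eq, Real.sqrt_eq_one] at hu
    exact hu
  have huu : star u' ⬝ᵥ u' = 1 := by
    simp only [dotProduct, Pi.star_apply, hu', Complex.star_def, Complex.conj_mul']
    exact_mod_cast congrArg (Complex.ofReal) hsum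
  have hww : star w ⬝ᵥ w = (σ : ℂ) ^ 2 := by
    have hs : star w ⬝ᵥ w = star u' ⬝ᵥ ((Zᴴ * Z) *ᵥ u') := by
      rw [hw, star_mulVec, ← dotProduct_mulVec, mulVec_mulVec]
    rw [hs, hev, dotProduct_smul, huu, smul_eq_mul, mul_one]
  have hwnorm : ∑ i, ‖w i‖ ^ 2 = σ ^ 2 := by
    have : ((∑ i, ‖w i‖ ^ 2 : ℝ) : ℂ) = ((σ : ℝ) ^ 2 : ℝ) := by
      push_cast
      rw [← hww]
      simp only [dotProduct, Pi.star_apply, Complex.star_def, Complex.conj_mul']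
    exact_mod_cast this
  refine ⟨key, ?_, ?_⟩
  · rw [EuclideanSpace.norm_eq, Real.sqrt_eq_one]
    have hvabs : ∀ i, ‖v i‖ ^ 2 = σ⁻¹ ^ 2 * ‖w i‖ ^ 2 := by
      intro i
      rw [hv i]
      simp [← hw, norm_mul, mul_pow, abs_of_pos hσ]
    calc ∑ i, ‖v i‖ ^ 2 = ∑ i, σ⁻¹ ^ 2 * ‖w i‖ ^ 2 := by
          exact Finset.sum_congr rfl fun i _ => hvabs i
      _ = σ⁻¹ ^ 2 * ∑ i, ‖w i‖ ^ 2 := by rw [Finset.mul_sum]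
      _ = 1 := by rw [hwnorm]; field_simp
  · have h0 : u' ⬝ᵥ w = 0 := by
      have hc : u' ⬝ᵥ w = -(u' ⬝ᵥ w) := by
        calc u' ⬝ᵥ w = u' ⬝ᵥ (Z *ᵥ u') := by rw [← hw]
          _ = (u' ᵥ* Z) ⬝ᵥ u' := dotProduct_mulVec _ _ _
          _ = (Zᵀ *ᵥ u') ⬝ᵥ u' := by rw [mulVec_transpose]
          _ = ((-Z) *ᵥ u') ⬝ᵥ u' := by rw [hskew]
          _ = -((Z *ᵥ u') ⬝ᵥ u') := by rw [Matrix.neg_mulVec, neg_dotProduct]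
          _ = -(u' ⬝ᵥ (Z *ᵥ u')) := by rw [dotProduct_comm]
          _ = -(u' ⬝ᵥ w) := by rw [← hw]
      linear_combination hc / 2
    calc ∑ i, conj (u i) * v i = ∑ i, (σ : ℂ)⁻¹ * conj (u' i * w i) := by
          refine Finset.sum_congr rfl fun i _ => ?_
          rw [hv i]
          simp [← hw, hu']
          ring
      _ = (σ : ℂ)⁻¹ * conj (u' ⬝ᵥ w) := by
          rw [← Finset.mul_sum, dotProduct, map_sum]
      _ = 0 := by rw [h0]; simp
end

section
/- For orthogonal vectors α, β ∈ ℂ^m (i.e. α*β = 0), the skew-symmetric matrix Z = α βᵀ − β αᵀ satisfies Z* Z = ‖α‖² · conj(β) βᵀ + ‖β‖² · conj(α) αᵀ, and consequently the operator norm of Z equals ‖α‖ · ‖β‖. -/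
open Matrix ComplexConjugate

/-- The operator norm of a complex `m × n` matrix. -/
noncomputable def matOpNorm {m n : ℕ} (A : Matrix (Fin m) (Fin n) ℂ) : ℝ :=
  ‖LinearMap.toContinuousLinearMap (Matrix.toEuclideanLin A)‖

lemma norm_sq_eq_sum_conj {m : ℕ} (α : EuclideanSpace ℂ (Fin m)) :
    ((‖α‖:ℂ)^2) = ∑ k, conj (α k) * α k := by
  have h := @inner_self_eq_norm_sq_to_K ℂ _ _ _ _ α
  rw [PiLp.inner_apply] at h
  simpa [RCLike.inner_apply, Complex.conj_mul'] using h.symm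

lemma matOpNorm_zero {m : ℕ} : matOpNorm (0 : Matrix (Fin m) (Fin m) ℂ) = 0 := by
  rw [matOpNorm, map_zero]
  have : LinearMap.toContinuousLinearMap
      (0 : EuclideanSpace ℂ (Fin m) →ₗ[ℂ] EuclideanSpace ℂ (Fin m)) = 0 := by
    ext x; rfl
  rw [this, norm_zero]

lemma bessel_two {E : Type*} [NormedAddCommGroup E] [InnerProductSpace ℂ E]
    (u v : E) (huv : (inner ℂ u v : ℂ) = 0) (x : E) :
    ‖(inner ℂ u x : ℂ)‖^2 * ‖v‖^2 + ‖(inner ℂ v x : ℂ)‖^2 * ‖u‖^2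
      ≤ ‖u‖^2 * ‖v‖^2 * ‖x‖^2 := by
  by_cases hu : u = 0
  · simp [hu]
  by_cases hv : v = 0
  · simp [hv]
  have hun : 0 < ‖u‖ := norm_pos_iff.mpr hu
  have hvn : 0 < ‖v‖ := norm_pos_iff.mpr hv
  have hvu : (inner ℂ v u : ℂ) = 0 := by rw [← inner_conj_symm, huv, map_zero]
  set e : Fin 2 → E := ![((‖u‖:ℂ)⁻¹) • u, ((‖v‖:ℂ)⁻¹) • v] with he
  have huC : ((‖u‖:ℂ)) ≠ 0 := by exact_mod_cast hun.ne'
  have hvC : ((‖v‖:ℂ)) ≠ 0 := by exact_mod_cast hvn.ne'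
  have hON : Orthonormal ℂ e := by
    rw [orthonormal_iff_ite]
    intro i j
    fin_cases i <;> fin_cases j <;>
      simp [he, inner_smul_left, inner_smul_right, inner_self_eq_norm_sq_to_K,
        huv, hvu, huC, hvC]
    · left; rw [norm_smul]; simp [hun.ne']
    · left; rw [norm_smul]; simp [hvn.ne']
  have hb := hON.sum_inner_products_le (s := Finset.univ) x
  rw [Fin.sum_univ_two] at hb
  have h0 : ‖(inner ℂ (e 0) x : ℂ)‖ = ‖u‖⁻¹ * ‖(inner ℂ u x : ℂ)‖ := by
    simp [he, inner_smul_left, norm_mul, mul_comm]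
  have h1 : ‖(inner ℂ (e 1) x : ℂ)‖ = ‖v‖⁻¹ * ‖(inner ℂ v x : ℂ)‖ := by
    simp [he, inner_smul_left, norm_mul, mul_comm]
  rw [h0, h1] at hb
  have key : (‖u‖⁻¹ * ‖(inner ℂ u x : ℂ)‖)^2 + (‖v‖⁻¹ * ‖(inner ℂ v x : ℂ)‖)^2 ≤ ‖x‖^2 := hb
  have := mul_le_mul_of_nonneg_left key (by positivity : (0:ℝ) ≤ ‖u‖^2 * ‖v‖^2)
  calc ‖(inner ℂ u x : ℂ)‖^2 * ‖v‖^2 + ‖(inner ℂ v x : ℂ)‖^2 * ‖u‖^2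
      = ‖u‖^2 * ‖v‖^2 * ((‖u‖⁻¹ * ‖(inner ℂ u x : ℂ)‖)^2 + (‖v‖⁻¹ * ‖(inner ℂ v x : ℂ)‖)^2) := by
        field_simp
    _ ≤ ‖u‖^2 * ‖v‖^2 * ‖x‖^2 := this

/-- For orthogonal vectors `α, β ∈ ℂ^m`, the skew-symmetric matrix `Z = αβᵀ − βαᵀ`
satisfies `Z*Z = ‖α‖² conj(β)βᵀ + ‖β‖² conj(α)αᵀ`, and consequently
`‖Z‖ = ‖α‖·‖β‖` in the operator norm. -/
theorem stmt_4 {m : ℕ} (α β : EuclideanSpace ℂ (Fin m))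
    (horth : ∑ i, conj (α i) * β i = 0)
    (Z : Matrix (Fin m) (Fin m) ℂ)
    (hZ : Z = Matrix.of fun i j => α i * β j - β i * α j) :
    Zᴴ * Z = ((‖α‖ : ℂ) ^ 2) • Matrix.of (fun i j => conj (β i) * β j)
        + ((‖β‖ : ℂ) ^ 2) • Matrix.of (fun i j => conj (α i) * α j) ∧
      matOpNorm Z = ‖α‖ * ‖β‖ := by
  have horth' : ∑ i, conj (β i) * α i = 0 := by
    have := congrArg conj horth
    simpa [map_sum, mul_comm] using this
  constructor
  · ext i j
    have lhs : (Zᴴ * Z) i j = ∑ k, conj (Z k i) * Z k j := by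
      simp [Matrix.mul_apply, conjTranspose_apply]
    rw [lhs]
    have expand : ∀ k, conj (Z k i) * Z k j =
        (conj (α k) * α k) * (conj (β i) * β j) + (conj (β k) * β k) * (conj (α i) * α j)
          - (conj (α k) * β k) * (conj (β i) * α j) - (conj (β k) * α k) * (conj (α i) * β j) := by
      intro k; simp [hZ]; ring
    rw [Finset.sum_congr rfl fun k _ => expand k]
    simp only [Finset.sum_sub_distrib, Finset.sum_add_distrib, ← Finset.sum_mul]
    rw [horth, horth', ← norm_sq_eq_sum_conj, ← norm_sq_eq_sum_conj]
    simp only [Matrix.add_apply, Matrix.smul_apply, Matrix.of_apply, smul_eq_mul,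
      zero_mul, sub_zero]
  · -- operator norm
    set u : EuclideanSpace ℂ (Fin m) := (WithLp.equiv 2 _).symm fun k => conj (α k) with hu
    set v : EuclideanSpace ℂ (Fin m) := (WithLp.equiv 2 _).symm fun k => conj (β k) with hv
    have hunorm : ‖u‖ = ‖α‖ := by
      simp [hu, EuclideanSpace.norm_eq]
    have hvnorm : ‖v‖ = ‖β‖ := by
      simp [hv, EuclideanSpace.norm_eq]
    have hiu : ∀ x : EuclideanSpace ℂ (Fin m), (inner ℂ u x : ℂ) = ∑ j, α j * x j := by
      intro x; simp [PiLp.inner_apply, RCLike.inner_apply, hu, mul_comm]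
    have hiv : ∀ x : EuclideanSpace ℂ (Fin m), (inner ℂ v x : ℂ) = ∑ j, β j * x j := by
      intro x; simp [PiLp.inner_apply, RCLike.inner_apply, hv, mul_comm]
    have horthℂ : (inner ℂ α β : ℂ) = 0 := by
      simpa [PiLp.inner_apply, RCLike.inner_apply, mul_comm] using horth
    have huv : (inner ℂ u v : ℂ) = 0 := by
      rw [hiu]
      have h2 : ∑ j, α j * conj (β j) = 0 := by
        have := congrArg conj horth
        simpa [map_sum] using this
      simpa [hv] using h2
    have hivv : (inner ℂ v v : ℂ) = (‖v‖:ℂ) ^ 2 := inner_self_eq_norm_sq_to_K v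
    have hfx : ∀ x : EuclideanSpace ℂ (Fin m),
        Matrix.toEuclideanLin Z x = (inner ℂ v x : ℂ) • α - (inner ℂ u x : ℂ) • β := by
      intro x
      rw [hiu, hiv]
      apply (WithLp.equiv 2 _).injective
      funext i
      simp only [Matrix.toEuclideanLin_apply, Matrix.mulVec, dotProduct, hZ, Matrix.of_apply,
        sub_mul, Finset.sum_sub_distrib, WithLp.equiv_apply, WithLp.ofLp_toLp, WithLp.ofLp_sub, WithLp.ofLp_smul,
        Pi.sub_apply, Pi.smul_apply,
        PiLp.sub_apply, PiLp.smul_apply, smul_eq_mul, Finset.mul_sum, Finset.sum_mul]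
      congr 1 <;> exact Finset.sum_congr rfl fun k _ => by ring
    have hsq : ∀ x : EuclideanSpace ℂ (Fin m),
        ‖Matrix.toEuclideanLin Z x‖ ^ 2
          = ‖(inner ℂ v x : ℂ)‖ ^ 2 * ‖α‖ ^ 2 + ‖(inner ℂ u x : ℂ)‖ ^ 2 * ‖β‖ ^ 2 := by
      intro x
      rw [hfx, @norm_sub_sq ℂ]
      rw [inner_smul_left, inner_smul_right, horthℂ]
      simp [norm_smul]
      ring
    set f := LinearMap.toContinuousLinearMap (Matrix.toEuclideanLin Z) with hf
    have hfap : ∀ x, f x = Matrix.toEuclideanLin Z x := fun x => rfl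
    by_cases hβ : β = 0
    · have hZ0 : Z = 0 := by ext i j; simp [hZ, hβ]
      rw [hZ0, matOpNorm_zero, hβ, norm_zero, mul_zero]
    have hβn : (0:ℝ) < ‖β‖ := norm_pos_iff.mpr hβ
    have hbound : ∀ x : EuclideanSpace ℂ (Fin m), ‖f x‖ ≤ ‖α‖ * ‖β‖ * ‖x‖ := by
      intro x
      have hb := bessel_two u v huv x
      rw [hunorm, hvnorm] at hb
      have h1 : ‖f x‖ ^ 2 ≤ (‖α‖ * ‖β‖ * ‖x‖) ^ 2 := by
        rw [hfap, hsq]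
        nlinarith [hb]
      have h2 := Real.sqrt_le_sqrt h1
      rwa [Real.sqrt_sq (norm_nonneg _), Real.sqrt_sq (by positivity)] at h2
    have hupper : matOpNorm Z ≤ ‖α‖ * ‖β‖ :=
      ContinuousLinearMap.opNorm_le_bound f (by positivity) hbound
    have hfv : f v = ((‖β‖:ℂ) ^ 2) • α := by
      rw [hfap, hfx, huv, hivv, hvnorm]
      simp
    have hlow : ‖α‖ * ‖β‖ ≤ matOpNorm Z := by
      have h := f.le_opNorm v
      rw [hfv, norm_smul, hvnorm] at h
      have hc : ‖((‖β‖:ℂ) ^ 2)‖ = ‖β‖ ^ 2 := by simp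
      rw [hc] at h
      have hβ2 : ‖β‖ ^ 2 * ‖α‖ = (‖α‖ * ‖β‖) * ‖β‖ := by ring
      rw [hβ2] at h
      exact le_of_mul_le_mul_right h hβn
    exact le_antisymm hupper hlow
end

section
/- Let a ∈ ℂ^m, b ∈ ℂ^n be unit vectors, α ∈ ℂ^m with a*α = 0, β ∈ ℂ^n with b*β = 0, and B₀ ≠ 0 an m×n matrix with a*B₀ = 0 and B₀ b = 0. If a α* B₀ + B₀ β b* = 0, then B₀* α = 0 and B₀ β = 0. Consequently, the space of pairs (α, β) with a*α = 0, b*β = 0 and a α* B₀ + B₀ β b* = 0 has complex dimension at most m + n − 4. -/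
open Matrix ComplexConjugate

lemma unit_sum {n : ℕ} (b : EuclideanSpace ℂ (Fin n)) (hb : ‖b‖ = 1) :
    ∑ j, conj (b j) * b j = (1:ℂ) := by
  have h1 : (inner ℂ b b : ℂ) = (‖b‖:ℂ)^2 := inner_self_eq_norm_sq_to_K b
  rw [hb] at h1
  simp only [PiLp.inner_apply, RCLike.inner_apply'] at h1
  convert h1 using 1
  simp

lemma keyR {m n : ℕ} (b : EuclideanSpace ℂ (Fin n)) (hb : ‖b‖ = 1)
    (B₀ : Matrix (Fin m) (Fin n) ℂ) (hright : B₀ *ᵥ (fun j => b j) = 0)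
    (A : Matrix (Fin m) (Fin m) ℂ) (β : Fin n → ℂ)
    (hzero : A * B₀ + B₀ * Matrix.of (fun k j => β k * conj (b j)) = 0) :
    B₀ *ᵥ β = 0 := by
  have h := congrArg (fun M => M *ᵥ (fun j => b j)) hzero
  simp only [Matrix.add_mulVec, Matrix.zero_mulVec, ← Matrix.mulVec_mulVec] at h
  rw [hright, Matrix.mulVec_zero, zero_add] at h
  have hc : (Matrix.of (fun k j => β k * conj (b j))) *ᵥ (fun j => b j) = β := by
    funext k
    simp only [Matrix.mulVec, dotProduct, Matrix.of_apply, mul_assoc, ← Finset.mul_sum]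
    rw [unit_sum b hb, mul_one]
  rwa [hc] at h

lemma keyL {m n : ℕ} (a : EuclideanSpace ℂ (Fin m)) (ha : ‖a‖ = 1)
    (B₀ : Matrix (Fin m) (Fin n) ℂ)
    (hleft : Matrix.vecMul (fun i => conj (a i)) B₀ = 0)
    (C : Matrix (Fin n) (Fin n) ℂ) (x : Fin m → ℂ)
    (hzero : Matrix.of (fun i k => a i * x k) * B₀ + B₀ * C = 0) :
    Matrix.vecMul x B₀ = 0 := by
  have h := congrArg (fun M => Matrix.vecMul (fun i => conj (a i)) M) hzero
  simp only [Matrix.vecMul_add, Matrix.vecMul_zero, ← Matrix.vecMul_vecMul] at h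
  rw [hleft, Matrix.zero_vecMul, add_zero] at h
  have hc : Matrix.vecMul (fun i => conj (a i)) (Matrix.of (fun i k => a i * x k)) = x := by
    funext k
    simp only [Matrix.vecMul, dotProduct, Matrix.of_apply]
    have : ∀ i, conj (a i) * (a i * x k) = conj (a i) * a i * x k := by intro i; ring
    simp only [this, ← Finset.sum_mul]
    rw [unit_sum a ha, one_mul]
  rwa [hc] at h

noncomputable def dotL {m : ℕ} (a : Fin m → ℂ) : (Fin m → ℂ) →ₗ[ℂ] ℂ where
  toFun x := ∑ i, a i * x i
  map_add' x y := by simp [mul_add, Finset.sum_add_distrib]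
  map_smul' c x := by simp [Finset.mul_sum]; ring_nf; simp [mul_comm, mul_assoc, mul_left_comm]

def subProdEquiv {R M N : Type*} [CommRing R] [AddCommGroup M] [AddCommGroup N]
    [Module R M] [Module R N] (p : Submodule R M) (q : Submodule R N) :
    (p.prod q) ≃ₗ[R] p × q where
  toFun x := (⟨x.1.1, x.2.1⟩, ⟨x.1.2, x.2.2⟩)
  invFun x := ⟨(x.1.1, x.2.1), ⟨x.1.2, x.2.2⟩⟩
  map_add' x y := rfl
  map_smul' c x := rfl
  left_inv x := rfl
  right_inv x := rfl


lemma aux_dim {E F : Type*} [AddCommGroup E] [Module ℂ E] [FiniteDimensional ℂ E]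
    [AddCommGroup F] [Module ℂ F] (f : E →ₗ[ℂ] ℂ) (g : E →ₗ[ℂ] F)
    (hg : g ≠ 0) (v : E) (hgv : g v = 0) (hfv : f v ≠ 0) :
    Module.finrank ℂ (LinearMap.ker f ⊓ LinearMap.ker g : Submodule ℂ E) + 2
      ≤ Module.finrank ℂ E := by
  set K := LinearMap.ker g with hK
  have h1 : Module.finrank ℂ (LinearMap.range g) + Module.finrank ℂ K
      = Module.finrank ℂ E := LinearMap.finrank_range_add_finrank_ker g
  have hr1 : 1 ≤ Module.finrank ℂ (LinearMap.range g) := by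
    by_contra h
    push_neg at h
    interval_cases h' : Module.finrank ℂ (LinearMap.range g)
    · exact hg (LinearMap.range_eq_bot.mp (Submodule.finrank_eq_zero.mp h'))
  set h := f.domRestrict K with hh
  have h2 : Module.finrank ℂ (LinearMap.range h) + Module.finrank ℂ (LinearMap.ker h)
      = Module.finrank ℂ K := LinearMap.finrank_range_add_finrank_ker h
  have hr2 : 1 ≤ Module.finrank ℂ (LinearMap.range h) := by
    by_contra hc
    push_neg at hc
    interval_cases h' : Module.finrank ℂ (LinearMap.range h)
    · have hb : LinearMap.range h = ⊥ := Submodule.finrank_eq_zero.mp h'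
      have : h ⟨v, hgv⟩ = 0 := by
        have := LinearMap.mem_range_self h ⟨v, hgv⟩
        rw [hb] at this
        simpa using this
      exact hfv this
  have h3 : Module.finrank ℂ (LinearMap.ker h)
      = Module.finrank ℂ (LinearMap.ker f ⊓ K : Submodule ℂ E) := by
    have hker : LinearMap.ker h = (LinearMap.ker f).comap K.subtype := by
      rw [hh, LinearMap.domRestrict, LinearMap.ker_comp]
    have := Submodule.finrank_map_subtype_eq K (LinearMap.ker h)
    rw [hker, Submodule.map_comap_subtype] at this
    rw [hker, ← this, inf_comm]
  omega


/-- Let `a, b` be unit vectors, `α ⊥ a`, `β ⊥ b`, and `B₀ ≠ 0` with `a*B₀ = 0`,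
`B₀ b = 0`.  If `aα*B₀ + B₀βb* = 0`, then `B₀*α = 0` and `B₀β = 0`.  Consequently the
space of pairs `(α, β)` with `a*α = 0`, `b*β = 0`, `aα*B₀ + B₀βb* = 0` has complex
dimension at most `m + n − 4`.  (Since the condition is antilinear in `α`, this space
is realized as a complex subspace in the variables `(α', β) = (conj α, β)`; note
`a*α = 0 ↔ aᵀα' = 0` and `α* = α'ᵀ`.) -/
theorem stmt_10 {m n : ℕ} (a : EuclideanSpace ℂ (Fin m)) (b : EuclideanSpace ℂ (Fin n))
    (ha : ‖a‖ = 1) (hb : ‖b‖ = 1)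
    (α : EuclideanSpace ℂ (Fin m)) (β : EuclideanSpace ℂ (Fin n))
    (hα : ∑ i, conj (a i) * α i = 0) (hβ : ∑ j, conj (b j) * β j = 0)
    (B₀ : Matrix (Fin m) (Fin n) ℂ) (hB₀ : B₀ ≠ 0)
    (hleft : Matrix.vecMul (fun i => conj (a i)) B₀ = 0)
    (hright : B₀ *ᵥ (fun j => b j) = 0)
    (hzero : Matrix.of (fun i k => a i * conj (α k)) * B₀
        + B₀ * Matrix.of (fun k j => β k * conj (b j)) = 0) :
    B₀ᴴ *ᵥ (fun i => α i) = 0 ∧ B₀ *ᵥ (fun j => β j) = 0 ∧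
      ∀ W : Submodule ℂ ((Fin m → ℂ) × (Fin n → ℂ)),
        (W : Set ((Fin m → ℂ) × (Fin n → ℂ))) =
          {p | (∑ i, a i * p.1 i) = 0 ∧ (∑ j, conj (b j) * p.2 j) = 0 ∧
            Matrix.of (fun i k => a i * p.1 k) * B₀
              + B₀ * Matrix.of (fun k j => p.2 k * conj (b j)) = 0} →
        Module.finrank ℂ W ≤ m + n - 4 := by
  refine ⟨?_, keyR b hb B₀ hright _ β hzero, ?_⟩
  · have hv := keyL a ha B₀ hleft _ (fun k => conj (α k)) hzero
    funext j
    have h1 := congrFun hv j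
    simp only [Matrix.vecMul, dotProduct, Pi.zero_apply] at h1
    have h2 : conj (∑ i, conj (α i) * B₀ i j) = 0 := by rw [h1]; simp
    rw [map_sum] at h2
    simp only [_root_.map_mul, Complex.conj_conj] at h2
    simpa [Matrix.mulVec, dotProduct, Matrix.conjTranspose_apply, mul_comm] using h2
  · intro W hW
    classical
    -- the four linear maps
    set f₁ : (Fin m → ℂ) →ₗ[ℂ] ℂ := dotL (fun i => a i) with hf₁
    set g₁ : (Fin m → ℂ) →ₗ[ℂ] (Fin n → ℂ) := Matrix.vecMulLinear B₀ with hg₁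
    set f₂ : (Fin n → ℂ) →ₗ[ℂ] ℂ := dotL (fun j => conj (b j)) with hf₂
    set g₂ : (Fin n → ℂ) →ₗ[ℂ] (Fin m → ℂ) := Matrix.mulVecLin B₀ with hg₂
    set V₁ : Submodule ℂ (Fin m → ℂ) := LinearMap.ker f₁ ⊓ LinearMap.ker g₁ with hV₁
    set V₂ : Submodule ℂ (Fin n → ℂ) := LinearMap.ker f₂ ⊓ LinearMap.ker g₂ with hV₂
    have hle : W ≤ V₁.prod V₂ := by
      intro p hp
      have hp' : p ∈ (W : Set ((Fin m → ℂ) × (Fin n → ℂ))) := hp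
      rw [hW] at hp'
      obtain ⟨hp1, hp2, hp3⟩ := hp'
      have hx : Matrix.vecMul p.1 B₀ = 0 := keyL a ha B₀ hleft _ p.1 hp3
      have hy : B₀ *ᵥ p.2 = 0 := keyR b hb B₀ hright _ p.2 hp3
      refine ⟨⟨?_, ?_⟩, ?_, ?_⟩
      · simpa [hf₁, dotL, LinearMap.mem_ker] using hp1
      · simpa [hg₁, LinearMap.mem_ker] using hx
      · simpa [hf₂, dotL, LinearMap.mem_ker] using hp2
      · simpa [hg₂, LinearMap.mem_ker] using hy
    have hd1 : Module.finrank ℂ V₁ + 2 ≤ m := by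
      have := aux_dim f₁ g₁ ?_ (fun i => conj (a i)) ?_ ?_
      · simpa [Module.finrank_fin_fun] using this
      · intro hc
        apply hB₀
        ext i j
        have := congrFun (congrArg (fun f => f (Pi.single i 1)) (congrArg DFunLike.coe hc)) j
        simpa [hg₁, Matrix.vecMul, dotProduct, Pi.single_apply] using this
      · simpa [hg₁] using hleft
      · simp only [hf₁, dotL, LinearMap.coe_mk, AddHom.coe_mk]
        rw [show (∑ x, a x * conj (a x)) = ∑ x, conj (a x) * a x from
          Finset.sum_congr rfl fun _ _ => mul_comm _ _, unit_sum a ha]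
        exact one_ne_zero
    have hd2 : Module.finrank ℂ V₂ + 2 ≤ n := by
      have := aux_dim f₂ g₂ ?_ (fun j => b j) ?_ ?_
      · simpa [Module.finrank_fin_fun] using this
      · intro hc
        apply hB₀
        ext i j
        have := congrFun (congrArg (fun f => f (Pi.single j 1)) (congrArg DFunLike.coe hc)) i
        simpa [hg₂, Matrix.mulVec, dotProduct, Pi.single_apply] using this
      · simpa [hg₂] using hright
      · simp only [hf₂, dotL, LinearMap.coe_mk, AddHom.coe_mk]
        rw [unit_sum b hb]
        exact one_ne_zero
    have hprod : Module.finrank ℂ (V₁.prod V₂) = Module.finrank ℂ V₁ + Module.finrank ℂ V₂ := by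
      rw [(subProdEquiv V₁ V₂).finrank_eq, Module.finrank_prod]
    have hmono : Module.finrank ℂ W ≤ Module.finrank ℂ (V₁.prod V₂) :=
      Submodule.finrank_mono hle
    omega
end

section
/- Let a ∈ ℂ^m be a unit vector, α ∈ ℂ^m with a*α = 0, and B₀ an m×m matrix with B₀ᵀ = B₀ and B₀ · conj(a) = 0. If a α* B₀ + B₀ conj(α) aᵀ = 0 then B₀ · conj(α) = 0. Hence the space of such α in the orthogonal complement of a for which a α* B₀ + B₀ conj(α) aᵀ = 0 has complex dimension m − 1 − codim(ker B₀), which is at most m − 2 when B₀ ≠ 0. -/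
open Matrix ComplexConjugate

/-- Let `a ∈ ℂ^m` be a unit vector and `B₀` symmetric with `B₀ conj(a) = 0`.
If `α ⊥ a` and `aα*B₀ + B₀ conj(α)aᵀ = 0` then `B₀ conj(α) = 0`.  Hence the space of
such `α` has complex dimension `m − 1 − rank B₀`, which is at most `m − 2` when
`B₀ ≠ 0`.  (The conditions are antilinear in `α`; the space is realized as a complex
subspace in the variable `α' = conj α`, using `a*α = 0 ↔ aᵀα' = 0` and `α* = α'ᵀ`.) -/
theorem stmt_16 {m : ℕ} (a : EuclideanSpace ℂ (Fin m)) (ha : ‖a‖ = 1)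
    (B₀ : Matrix (Fin m) (Fin m) ℂ) (hsym : B₀ᵀ = B₀)
    (hBa : B₀ *ᵥ (fun i => conj (a i)) = 0) :
    (∀ α : Fin m → ℂ, (∑ i, conj (a i) * α i) = 0 →
      Matrix.of (fun i j => a i * conj (α j)) * B₀
        + B₀ * Matrix.of (fun i j => conj (α i) * a j) = 0 →
      B₀ *ᵥ (fun i => conj (α i)) = 0) ∧
    ∀ W : Submodule ℂ (Fin m → ℂ),
      (W : Set (Fin m → ℂ)) =
        {α' | (∑ i, a i * α' i) = 0 ∧
          Matrix.of (fun i j => a i * α' j) * B₀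
            + B₀ * Matrix.of (fun i j => α' i * a j) = 0} →
      Module.finrank ℂ W = m - 1 - B₀.rank ∧
        (B₀ ≠ 0 → Module.finrank ℂ W ≤ m - 2) := by
  classical
  -- ∑ aᵢ conj aᵢ = 1
  have hsum : (∑ i, a i * conj (a i)) = 1 := by
    have h := inner_self_eq_norm_sq_to_K (𝕜 := ℂ) a
    rw [PiLp.inner_apply, ha] at h
    simp only [RCLike.inner_apply] at h
    calc (∑ i, a i * conj (a i)) = ∑ i, conj (a i) * a i := by simp [mul_comm]
      _ = 1 := by refine (Finset.sum_congr rfl fun i _ => mul_comm _ _).trans ?_; rw [h]; norm_num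
  -- key step: multiplying the matrix identity by conj a on the right
  have key : ∀ α' : Fin m → ℂ,
      Matrix.of (fun i j => a i * α' j) * B₀
        + B₀ * Matrix.of (fun i j => α' i * a j) = 0 → B₀ *ᵥ α' = 0 := by
    intro α' hmat
    have h := congrArg (fun M => M *ᵥ (fun i => conj (a i))) hmat
    simp only [Matrix.add_mulVec, Matrix.zero_mulVec] at h
    rw [← Matrix.mulVec_mulVec, ← Matrix.mulVec_mulVec, hBa, Matrix.mulVec_zero,
      zero_add] at h
    have hN : (Matrix.of fun i j => α' i * a j) *ᵥ (fun i => conj (a i)) = α' := by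
      funext i
      simp only [Matrix.mulVec, dotProduct, Matrix.of_apply, mul_assoc,
        ← Finset.mul_sum, hsum, mul_one]
    rwa [hN] at h
  -- converse: B₀ α' = 0 implies the matrix identity
  have conv : ∀ α' : Fin m → ℂ, B₀ *ᵥ α' = 0 →
      Matrix.of (fun i j => a i * α' j) * B₀
        + B₀ * Matrix.of (fun i j => α' i * a j) = 0 := by
    intro α' h0
    ext i j
    have h1 : ∑ k, B₀ j k * α' k = 0 := congrFun h0 j
    have h2 : ∑ k, B₀ i k * α' k = 0 := congrFun h0 i
    simp only [Matrix.add_apply, Matrix.mul_apply, Matrix.of_apply, Matrix.zero_apply]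
    have hs : ∀ k l, B₀ k l = B₀ l k := fun k l => by
      have h := congrFun (congrFun hsym k) l
      simpa [Matrix.transpose_apply] using h.symm
    calc (∑ k, a i * α' k * B₀ k j) + ∑ k, B₀ i k * (α' k * a j)
        = a i * (∑ k, B₀ j k * α' k) + (∑ k, B₀ i k * α' k) * a j := by
          rw [Finset.mul_sum, Finset.sum_mul]
          congr 1
          · exact Finset.sum_congr rfl fun k _ => by rw [hs k j]; ring
          · exact Finset.sum_congr rfl fun k _ => by ring
      _ = 0 := by rw [h1, h2]; ring
  refine ⟨fun α _ hmat => key _ hmat, ?_⟩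
  intro W hWset
  -- the linear functional x ↦ ∑ aᵢ xᵢ
  set L : (Fin m → ℂ) →ₗ[ℂ] ℂ :=
    { toFun := fun x => ∑ i, a i * x i
      map_add' := fun x y => by simp [mul_add, Finset.sum_add_distrib]
      map_smul' := fun c x => by simp [Finset.mul_sum]; ring_nf; simp [mul_comm, mul_assoc, mul_left_comm]
    } with hL
  set V := LinearMap.ker B₀.mulVecLin with hV
  have hWeq : W = V ⊓ LinearMap.ker L := by
    ext x
    have hx := Set.ext_iff.mp hWset x
    simp only [SetLike.mem_coe, Set.mem_setOf_eq] at hx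
    rw [hx]
    constructor
    · rintro ⟨h1, h2⟩
      exact ⟨key x h2, h1⟩
    · rintro ⟨h1, h2⟩
      exact ⟨h2, conv x h1⟩
  set ca : Fin m → ℂ := fun i => conj (a i) with hca
  have hcaV : ca ∈ V := hBa
  have hLca : L ca = 1 := hsum
  -- rank/nullity for B₀
  have hrn : B₀.rank + Module.finrank ℂ V = m := by
    have := LinearMap.finrank_range_add_finrank_ker B₀.mulVecLin
    rwa [Module.finrank_fin_fun] at this
  -- finrank ker L = m - 1
  have hLsurj : LinearMap.range L = ⊤ := by
    rw [LinearMap.range_eq_top]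
    intro c
    exact ⟨c • ca, by simp [_root_.map_smul, hLca]⟩
  have hkerL : Module.finrank ℂ (LinearMap.ker L) + 1 = m := by
    have := LinearMap.finrank_range_add_finrank_ker L
    rw [hLsurj, finrank_top, Module.finrank_self, Module.finrank_fin_fun] at this
    omega
  -- V ⊔ ker L = ⊤
  have hsup : V ⊔ LinearMap.ker L = ⊤ := by
    rw [eq_top_iff]
    intro y _
    rw [Submodule.mem_sup]
    refine ⟨L y • ca, Submodule.smul_mem _ _ hcaV, y - L y • ca, ?_, by abel⟩
    simp [LinearMap.mem_ker, map_sub, _root_.map_smul, hLca]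
  have hVpos : 1 ≤ Module.finrank ℂ V := by
    have hca0 : ca ≠ 0 := by
      intro h
      rw [h] at hLca
      simp at hLca
    exact Submodule.one_le_finrank_iff.mpr (by
      intro h
      exact hca0 (by simpa [h] using hcaV))
  have hinf := Submodule.finrank_sup_add_finrank_inf_eq V (LinearMap.ker L)
  rw [hsup, finrank_top, Module.finrank_fin_fun] at hinf
  rw [hWeq]
  constructor
  · omega
  · intro hB0
    have hrpos : 1 ≤ B₀.rank := by
      by_contra h
      have hr0 : B₀.rank = 0 := by omega
      apply hB0
      have hV0 : LinearMap.range B₀.mulVecLin = ⊥ :=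
        Submodule.finrank_eq_zero.mp hr0
      ext i j
      have : B₀.mulVecLin (Pi.single j 1) = 0 := by
        have := LinearMap.mem_range_self B₀.mulVecLin (Pi.single j 1)
        rw [hV0] at this
        simpa using this
      have := congrFun this i
      simpa [Matrix.mulVecLin_apply, Matrix.mulVec_single] using this
    omega
end
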